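/- Let A = ∑_{i≥0} A_i u^i ∈ M_n(ℂ[[u]]) and suppose the standard basis of ℂ^n is adapted to the generalized eigenspace decomposition of the residue A_0, i.e. each generalized eigenspace Ẽ_w of A_0 is spanned by a subset of the standard basis vectors. Then there exists P ∈ GL_n(ℂ[[u]]) with constant term P(0) = Id such that the matrix Ã = P^{-1}AP + u²P^{-1}(dP/du) = ∑_{i≥0} Ã_i u^i (which satisfies u²(d/du) + Ã = P^{-1}∘(u²(d/du) + A)∘P as operators on ℂ[[u]]^n) has the following properties: (i) every coefficient Ã_i preserves the generalized eigenspace decomposition, i.e. Ã_i(Ẽ_w) ⊆ Ẽ_w for all i and all eigenvalues w; and (ii) for every eigenvalue w, π_w ∘ Ã_1|_{Ẽ_w} = π_w ∘ A_1|_{Ẽ_w}, where π_w : ℂ^n → Ẽ_w is the projection along the other generalized eigenspaces (the diagonal blocks of Ã_1 and A_1 agree). -/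

import Mathlib

/-!
The generalized eigenspaces of `A₀` are coordinate subspaces, so a matrix commuting with `A₀` is
block diagonal. Hence `X ↦ X A₀ - A₀ X` is injective, and therefore bijective, on the space of
off-block-diagonal matrices.

Comparing coefficients of `u^(k+1)` in `P Ã = A P + u² P'` gives
`Ã_(k+1) + P_(k+1) A₀ - A₀ P_(k+1) = R_k`, where `R_k` only involves `P_j` and `Ã_j`
for `j ≤ k`.
Choosing `P_(k+1)` so that the commutator is the off-block part of `R_k` and letting `Ã_(k+1)` be
its block part determines `P` and `Ã` recursively, with `Ã` block diagonal. As `R_0 = A_1`, the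
blocks of `Ã_1` are those of `A_1`.
-/

open PowerSeries Matrix

noncomputable section

/-- Formal derivative of a power series in `ℂ[[u]]`. -/
def psD (f : PowerSeries ℂ) : PowerSeries ℂ :=
  PowerSeries.mk fun k => ((k : ℂ) + 1) * PowerSeries.coeff (k + 1) f

/-- Entrywise formal derivative of a matrix of power series. -/
def matD {I J : Type*} (M : Matrix I J (PowerSeries ℂ)) : Matrix I J (PowerSeries ℂ) :=
  Matrix.of fun i j => psD (M i j)

/-- The `k`-th coefficient matrix of a matrix of power series. -/
def coeffM {I J : Type*} (k : ℕ) (M : Matrix I J (PowerSeries ℂ)) : Matrix I J ℂ :=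
  Matrix.of fun i j => PowerSeries.coeff k (M i j)

namespace BlockDecomposition

open Module.End Finset

section Blocks

variable {ι α R : Type*}

def IsBlockDiagonal [Zero R] (d : ι → α) (M : Matrix ι ι R) : Prop :=
  ∀ i j, d i ≠ d j → M i j = 0

lemma mulVec_apply_eq_zero_of_isBlockDiagonal [Fintype ι] [Semiring R] {d : ι → α}
    {N : Matrix ι ι R} (hN : IsBlockDiagonal d N) {w : α} {x : ι → R}
    (hx : ∀ j, d j ≠ w → x j = 0) {i : ι} (hi : d i ≠ w) : (N *ᵥ x) i = 0 :=
  sum_eq_zero fun j _ => show N i j * x j = 0 by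
    by_cases hj : d j = w
    · rw [hN i j (fun h => hi (h.trans hj)), zero_mul]
    · rw [hx j hj, mul_zero]

variable [DecidableEq α]

def blockPart [Zero R] (d : ι → α) (M : Matrix ι ι R) : Matrix ι ι R :=
  of fun i j => if d i = d j then M i j else 0

def offBlockPart [Zero R] (d : ι → α) (M : Matrix ι ι R) : Matrix ι ι R :=
  of fun i j => if d i = d j then 0 else M i j

lemma blockPart_add_offBlockPart [AddZeroClass R] (d : ι → α) (M : Matrix ι ι R) :
    blockPart d M + offBlockPart d M = M := by
  ext i j
  by_cases h : d i = d j <;> simp [blockPart, offBlockPart, h]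

lemma isBlockDiagonal_blockPart [Zero R] (d : ι → α) (M : Matrix ι ι R) :
    IsBlockDiagonal d (blockPart d M) :=
  fun _ _ h => if_neg h

variable (R) in
def offBlockSubmodule [Semiring R] (d : ι → α) : Submodule R (Matrix ι ι R) where
  carrier := {X | ∀ i j, d i = d j → X i j = 0}
  add_mem' {X Y} hX hY i j h := by simp [hX i j h, hY i j h]
  zero_mem' _ _ _ := rfl
  smul_mem' c X hX i j h := by simp [hX i j h]

lemma offBlockPart_mem_offBlockSubmodule [Semiring R] (d : ι → α) (M : Matrix ι ι R) :
    offBlockPart d M ∈ offBlockSubmodule R d :=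
  fun _ _ h => if_pos h

variable [Fintype ι]

lemma commutator_mem_offBlockSubmodule [Ring R] {d : ι → α} {M X : Matrix ι ι R}
    (hM : IsBlockDiagonal d M) (hX : X ∈ offBlockSubmodule R d) :
    X * M - M * X ∈ offBlockSubmodule R d := by
  intro i j hij
  have hXM : (X * M) i j = 0 := (Matrix.mul_apply ..).trans <| sum_eq_zero fun l _ => by
    by_cases hl : d i = d l
    · rw [hX i l hl, zero_mul]
    · rw [hM l j (fun h => hl (hij.trans h.symm)), mul_zero]
  have hMX : (M * X) i j = 0 := (Matrix.mul_apply ..).trans <| sum_eq_zero fun l _ => by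
    by_cases hl : d l = d j
    · rw [hX l j hl, mul_zero]
    · rw [hM i l (fun h => hl (h.symm.trans hij)), zero_mul]
  rw [Matrix.sub_apply, hXM, hMX, sub_zero]

lemma offBlockPart_mulVec_apply_eq_zero [Semiring R] {d : ι → α} (N : Matrix ι ι R) {w : α}
    {x : ι → R} (hx : ∀ j, d j ≠ w → x j = 0) {i : ι} (hi : d i = w) :
    (offBlockPart d N *ᵥ x) i = 0 :=
  sum_eq_zero fun j _ => show offBlockPart d N i j * x j = 0 by
    by_cases hj : d j = w
    · rw [show offBlockPart d N i j = 0 from if_pos (hi.trans hj.symm), zero_mul]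
    · rw [hx j hj, mul_zero]

end Blocks

section Eigenspaces

variable {K ι : Type*} [Field K] [Fintype ι] [DecidableEq ι] {M : Matrix ι ι K} {d : ι → K}
  (hd : ∀ w, maxGenEigenspace M.mulVecLin w =
    Submodule.span K ((fun i => (Pi.single i 1 : ι → K)) '' {i | d i = w}))
include hd

lemma mem_maxGenEigenspace_iff {w : K} {x : ι → K} :
    x ∈ maxGenEigenspace M.mulVecLin w ↔ ∀ i, d i ≠ w → x i = 0 := by
  rw [hd, ← funext (Pi.basisFun_apply K ι), Module.Basis.mem_span_image]
  simp [Set.subset_def, not_imp_comm]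

lemma single_mem_maxGenEigenspace (j : ι) :
    Pi.single j 1 ∈ maxGenEigenspace M.mulVecLin (d j) :=
  (mem_maxGenEigenspace_iff hd).2 fun _ hi => Pi.single_eq_of_ne (fun h => hi (congrArg d h)) 1

lemma isBlockDiagonal_of_commute {X : Matrix ι ι K} (hX : Commute M X) :
    IsBlockDiagonal d X := by
  intro i j hij
  have hlin : Commute M.mulVecLin X.mulVecLin := by
    simpa only [Commute, SemiconjBy, Module.End.mul_eq_comp, ← mulVecLin_mul] using
      congrArg mulVecLin hX.eq
  have hXj := mapsTo_maxGenEigenspace_of_comm hlin (d j) (single_mem_maxGenEigenspace hd j)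
  simpa [mulVec_single_one] using (mem_maxGenEigenspace_iff hd).1 hXj i hij

lemma isBlockDiagonal_self : IsBlockDiagonal d M :=
  isBlockDiagonal_of_commute hd (Commute.refl M)

lemma mulVec_mem_maxGenEigenspace {N : Matrix ι ι K} (hN : IsBlockDiagonal d N) {w : K}
    {x : ι → K} (hx : x ∈ maxGenEigenspace M.mulVecLin w) :
    N *ᵥ x ∈ maxGenEigenspace M.mulVecLin w :=
  (mem_maxGenEigenspace_iff hd).2 fun _ hi =>
    mulVec_apply_eq_zero_of_isBlockDiagonal hN ((mem_maxGenEigenspace_iff hd).1 hx) hi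

lemma mem_iSup_maxGenEigenspace_ne_of_apply_eq_zero {w : K} {v : ι → K}
    (hv : ∀ i, d i = w → v i = 0) :
    v ∈ ⨆ w' : K, ⨆ _ : w' ≠ w, maxGenEigenspace M.mulVecLin w' := by
  rw [← univ_sum_single v]
  refine Submodule.sum_mem _ fun i _ => ?_
  by_cases hi : d i = w
  · simp [hv i hi]
  · refine Submodule.mem_iSup_of_mem (d i) (Submodule.mem_iSup_of_mem hi ?_)
    have h := Submodule.smul_mem _ (v i) (single_mem_maxGenEigenspace hd i)
    rwa [← Pi.single_smul', smul_eq_mul, mul_one] at h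

variable [DecidableEq K]

lemma blockPart_mulVec_sub_mulVec_mem_iSup_maxGenEigenspace (N : Matrix ι ι K) {w : K}
    {x : ι → K} (hx : x ∈ maxGenEigenspace M.mulVecLin w) :
    blockPart d N *ᵥ x - N *ᵥ x ∈
      ⨆ w' : K, ⨆ _ : w' ≠ w, maxGenEigenspace M.mulVecLin w' := by
  rw [show blockPart d N *ᵥ x - N *ᵥ x = -(offBlockPart d N *ᵥ x) by
    nth_rw 2 [← blockPart_add_offBlockPart d N]
    rw [add_mulVec, sub_add_cancel_left]]
  exact Submodule.neg_mem _ <| mem_iSup_maxGenEigenspace_ne_of_apply_eq_zero hd fun i hi =>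
    offBlockPart_mulVec_apply_eq_zero N ((mem_maxGenEigenspace_iff hd).1 hx) hi

theorem exists_mul_sub_mul_eq_offBlockPart (R : Matrix ι ι K) :
    ∃ X, X * M - M * X = offBlockPart d R := by
  let ad : Matrix ι ι K →ₗ[K] Matrix ι ι K := LinearMap.mulRight K M - LinearMap.mulLeft K M
  have hmaps : ∀ X ∈ offBlockSubmodule K d, ad X ∈ offBlockSubmodule K d :=
    fun _ hX => commutator_mem_offBlockSubmodule (isBlockDiagonal_self hd) hX
  have hinj : Function.Injective (ad.restrict hmaps) := by
    refine (injective_iff_map_eq_zero _).2 fun X hX => Subtype.ext ?_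
    have hcomm : Commute M X := (sub_eq_zero.1 (congrArg Subtype.val hX)).symm
    ext i j
    by_cases hij : d i = d j
    · exact X.2 i j hij
    · exact isBlockDiagonal_of_commute hd hcomm i j hij
  obtain ⟨X, hX⟩ := LinearMap.injective_iff_surjective.1 hinj
    ⟨_, offBlockPart_mem_offBlockSubmodule d R⟩
  exact ⟨X, congrArg Subtype.val hX⟩

end Eigenspaces

section CoeffM

variable {I J L : Type*}

def ofCoeffM (g : ℕ → Matrix I J ℂ) : Matrix I J ℂ⟦X⟧ :=
  of fun i j => mk fun k => g k i j

@[simp]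
lemma coeffM_ofCoeffM (g : ℕ → Matrix I J ℂ) (k : ℕ) : coeffM k (ofCoeffM g) = g k := by
  ext
  simp [coeffM, ofCoeffM]

lemma ext_coeffM {M N : Matrix I J ℂ⟦X⟧} (h : ∀ k, coeffM k M = coeffM k N) : M = N := by
  ext i j k
  exact congrFun (congrFun (h k) i) j

lemma coeffM_add (M N : Matrix I J ℂ⟦X⟧) (k : ℕ) :
    coeffM k (M + N) = coeffM k M + coeffM k N := by
  ext
  simp [coeffM]

lemma coeffM_mul [Fintype J] (M : Matrix I J ℂ⟦X⟧) (N : Matrix J L ℂ⟦X⟧) (k : ℕ) :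
    coeffM k (M * N) = ∑ p ∈ antidiagonal k, coeffM p.1 M * coeffM p.2 N := by
  ext i j
  simp only [coeffM, of_apply, Matrix.mul_apply, map_sum, coeff_mul, Matrix.sum_apply]
  exact sum_comm

lemma coeffM_X_sq_smul_matD_zero (M : Matrix I J ℂ⟦X⟧) :
    coeffM 0 ((X ^ 2 : ℂ⟦X⟧) • matD M) = 0 := by
  ext
  simp [coeffM, coeff_X_pow_mul']

lemma coeffM_X_sq_smul_matD_succ (M : Matrix I J ℂ⟦X⟧) (k : ℕ) :
    coeffM (k + 1) ((X ^ 2 : ℂ⟦X⟧) • matD M) = (k : ℂ) • coeffM k M := by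
  ext i j
  rcases k with _ | k
  · simp [coeffM, coeff_X_pow_mul']
  · simp [coeffM, coeff_X_pow_mul', matD, psD]

lemma isUnit_of_coeffM_zero_eq_one [Fintype I] [DecidableEq I] {P : Matrix I I ℂ⟦X⟧}
    (hP : coeffM 0 P = 1) : IsUnit P := by
  have h : (constantCoeff (R := ℂ)).mapMatrix P = 1 := by
    rw [← hP]
    ext
    simp [coeffM]
  rw [isUnit_iff_isUnit_det, isUnit_iff_constantCoeff, RingHom.map_det, h, det_one]
  exact isUnit_one

end CoeffM

section Gauge

variable {ι : Type*} [Fintype ι] [DecidableEq ι] (A : Matrix ι ι ℂ⟦X⟧) (d : ι → ℂ)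
  (solve : Matrix ι ι ℂ → Matrix ι ι ℂ)

-- `gaugeCoeffs k = (P_k, Ã_k)` and `gaugeRemainder k = R_k`.
mutual

def gaugeRemainder (k : ℕ) : Matrix ι ι ℂ :=
  ∑ j : Fin (k + 1), coeffM (j + 1) A * (gaugeCoeffs (k - j)).1
    - ∑ j : Fin k, (gaugeCoeffs (j + 1)).1 * (gaugeCoeffs (k - j)).2
    + (k : ℂ) • (gaugeCoeffs k).1
termination_by 2 * k + 1

def gaugeCoeffs : ℕ → Matrix ι ι ℂ × Matrix ι ι ℂ
  | 0 => (1, coeffM 0 A)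
  | k + 1 => (solve (gaugeRemainder k), blockPart d (gaugeRemainder k))
termination_by k => 2 * k

end

def gauge : Matrix ι ι ℂ⟦X⟧ := ofCoeffM fun k => (gaugeCoeffs A d solve k).1

def gaugeTransformed : Matrix ι ι ℂ⟦X⟧ := ofCoeffM fun k => (gaugeCoeffs A d solve k).2

lemma coeffM_zero_gauge : coeffM 0 (gauge A d solve) = 1 := by
  rw [gauge, coeffM_ofCoeffM, gaugeCoeffs]

lemma isBlockDiagonal_coeffM_gaugeTransformed (hA : IsBlockDiagonal d (coeffM 0 A)) (k : ℕ) :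
    IsBlockDiagonal d (coeffM k (gaugeTransformed A d solve)) := by
  rw [gaugeTransformed, coeffM_ofCoeffM]
  rcases k with _ | k
  · rwa [gaugeCoeffs]
  · rw [gaugeCoeffs]
    exact isBlockDiagonal_blockPart d _

lemma coeffM_one_gaugeTransformed :
    coeffM 1 (gaugeTransformed A d solve) = blockPart d (coeffM 1 A) := by
  rw [gaugeTransformed, coeffM_ofCoeffM, gaugeCoeffs, gaugeRemainder]
  simp [gaugeCoeffs]

theorem gauge_mul_gaugeTransformed
    (hsolve : ∀ R, solve R * coeffM 0 A - coeffM 0 A * solve R = offBlockPart d R) :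
    gauge A d solve * gaugeTransformed A d solve
      = A * gauge A d solve + (X ^ 2 : ℂ⟦X⟧) • matD (gauge A d solve) := by
  refine ext_coeffM fun k => ?_
  rw [coeffM_mul, coeffM_add, coeffM_mul, Nat.sum_antidiagonal_eq_sum_range_succ_mk,
    Nat.sum_antidiagonal_eq_sum_range_succ_mk]
  simp only [gauge, gaugeTransformed, coeffM_ofCoeffM]
  rcases k with _ | k
  · simp [coeffM_X_sq_smul_matD_zero, gaugeCoeffs]
  set R := gaugeRemainder A d solve k with hR
  have h0 : gaugeCoeffs A d solve 0 = (1, coeffM 0 A) := by rw [gaugeCoeffs]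
  have hk : gaugeCoeffs A d solve (k + 1) = (solve R, blockPart d R) := by rw [gaugeCoeffs]
  have hS : solve R * coeffM 0 A = coeffM 0 A * solve R + offBlockPart d R :=
    sub_eq_iff_eq_add'.1 (hsolve R)
  rw [gaugeRemainder] at hR
  rw [sum_range_succ, sum_range_succ', sum_range_succ' _ (k + 1),
    coeffM_X_sq_smul_matD_succ, coeffM_ofCoeffM]
  simp only [Nat.add_sub_add_right, Nat.sub_zero, Nat.sub_self, sum_range, h0, hk, one_mul, hS]
  calc _ = ∑ i : Fin k, (gaugeCoeffs A d solve (i + 1)).1 * (gaugeCoeffs A d solve (k - i)).2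
        + (blockPart d R + offBlockPart d R) + coeffM 0 A * solve R := by abel
    _ = _ := by rw [blockPart_add_offBlockPart, hR]; abel

end Gauge

end BlockDecomposition

open BlockDecomposition

theorem block_diagonalisation (n : ℕ) (A : Matrix (Fin n) (Fin n) (PowerSeries ℂ))
    -- the standard basis is adapted to the generalized eigenspace decomposition of the
    -- residue `A_0`: each generalized eigenspace is spanned by standard basis vectors
    (d : Fin n → ℂ)
    (hd : ∀ w : ℂ, Module.End.maxGenEigenspace (Matrix.mulVecLin (coeffM 0 A)) w =
      Submodule.span ℂ ((fun i : Fin n => (Pi.single i 1 : Fin n → ℂ)) '' {i | d i = w})) :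
    ∃ P Atil : Matrix (Fin n) (Fin n) (PowerSeries ℂ),
      IsUnit P ∧ coeffM 0 P = 1 ∧
      -- `Ã = P⁻¹AP + u²P⁻¹(dP/du)`, equivalently `P·Ã = A·P + u²·(dP/du)`,
      -- i.e. `u²(d/du) + Ã = P⁻¹ ∘ (u²(d/du) + A) ∘ P`
      P * Atil = A * P + (PowerSeries.X ^ 2 : PowerSeries ℂ) • matD P ∧
      -- (i) every coefficient `Ã_i` preserves the generalized eigenspace decomposition
      (∀ i : ℕ, ∀ w : ℂ,
        ∀ x ∈ Module.End.maxGenEigenspace (Matrix.mulVecLin (coeffM 0 A)) w,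
          (coeffM i Atil).mulVec x ∈
            Module.End.maxGenEigenspace (Matrix.mulVecLin (coeffM 0 A)) w) ∧
      -- (ii) the diagonal blocks of `Ã_1` and `A_1` agree:
      -- for `x ∈ Ẽ_w`, the difference `Ã_1 x − A_1 x` has vanishing component in `Ẽ_w`,
      -- i.e. it lies in the sum of the other generalized eigenspaces
      (∀ w : ℂ, ∀ x ∈ Module.End.maxGenEigenspace (Matrix.mulVecLin (coeffM 0 A)) w,
        (coeffM 1 Atil).mulVec x - (coeffM 1 A).mulVec x ∈
          ⨆ w' : ℂ, ⨆ _ : w' ≠ w,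
            Module.End.maxGenEigenspace (Matrix.mulVecLin (coeffM 0 A)) w') := by
  choose solve hsolve using exists_mul_sub_mul_eq_offBlockPart hd
  refine ⟨gauge A d solve, gaugeTransformed A d solve,
    isUnit_of_coeffM_zero_eq_one (coeffM_zero_gauge A d solve), coeffM_zero_gauge A d solve,
    gauge_mul_gaugeTransformed A d solve hsolve, fun i w x hx => ?_, fun w x hx => ?_⟩
  · exact mulVec_mem_maxGenEigenspace hd
      (isBlockDiagonal_coeffM_gaugeTransformed A d solve (isBlockDiagonal_self hd) i) hx
  · rw [coeffM_one_gaugeTransformed]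
    exact blockPart_mulVec_sub_mulVec_mem_iSup_maxGenEigenspace hd _ hx

end
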